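/- Let N ≥ 2, α, β > 0 with αβ > N², and let T = T₁ ∘ T₂ with T₁(v)(t) = ∫_t^1 (∫_0^s N τ^{N-1} v(τ)^α dτ)^{1/N} ds and T₂ defined with exponent β. Let K = {v ∈ C[0,1] : v ≥ 0, min_{[1/4,3/4]} v ≥ (1/4)‖v‖}. Then there exist constants Γ₁ > 0 (depending on N, α, β) such that ‖T(v)‖ ≥ Γ₁ ‖v‖^{αβ/N²} for all v ∈ K, and ‖T(v)‖ ≤ ‖v‖^{αβ/N²} for all v ∈ K. In particular, for 0 < r₁ < 1 one has ‖T(v)‖ < ‖v‖ on {v ∈ K : ‖v‖ = r₁}, and for r₂ sufficiently large one has ‖T(v)‖ > ‖v‖ on {v ∈ K : ‖v‖ = r₂}. -/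

import Mathlib

open Set

/-- Supremum norm on `C[0,1]`. -/
noncomputable def supNorm (v : ℝ → ℝ) : ℝ :=
  sSup ((fun t => |v t|) '' Icc (0:ℝ) 1)

/-- Membership in the cone `K ⊂ C[0,1]`. -/
def memK (v : ℝ → ℝ) : Prop :=
  ContinuousOn v (Icc (0:ℝ) 1) ∧ (∀ t ∈ Icc (0:ℝ) 1, 0 ≤ v t) ∧
    ∀ t ∈ Icc (1/4 : ℝ) (3/4), (1/4) * supNorm v ≤ v t

/-- The solution operator with exponent `γ`. -/
noncomputable def MAop (N : ℕ) (γ : ℝ) (v : ℝ → ℝ) : ℝ → ℝ :=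
  fun t => ∫ s in t..(1:ℝ),
    (∫ τ in (0:ℝ)..s, (N:ℝ) * τ ^ (N - 1) * v τ ^ γ) ^ ((N:ℝ)⁻¹)

/-!
If `0 ≤ w ≤ M` on `[0,1]`, the inner integral of `MAop N γ w` is at most `M ^ γ`, so
`MAop N γ w ≤ M ^ (γ / N)`. If moreover `w ≥ c` on `[1/4, 3/4]`, the inner integral is at least
`c ^ γ (1/4) ^ N` on `[3/4, 1]`, so `MAop N γ w ≥ c ^ (γ / N) / 16` on `[0, 3/4]`. A function `v` of
the cone satisfies `0 ≤ v ≤ ‖v‖` and `v ≥ ‖v‖ / 4` on `[1/4, 3/4]`; applying both bounds twice gives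
`Γ₁ ‖v‖ ^ p ≤ ‖T v‖ ≤ ‖v‖ ^ p` with `p = αβ / N² > 1`, and then `r ^ p < r` for `r < 1` while
`Γ₁ r ^ p > r` for large `r`.
-/

open MeasureTheory

noncomputable def MAinner (N : ℕ) (γ : ℝ) (w : ℝ → ℝ) (s : ℝ) : ℝ :=
  ∫ τ in (0:ℝ)..s, (N:ℝ) * τ ^ (N - 1) * w τ ^ γ

lemma integral_natCast_mul_pow_pred_mul {N : ℕ} (hN : 1 ≤ N) (c a b : ℝ) :
    ∫ τ in a..b, (N:ℝ) * τ ^ (N - 1) * c = c * (b ^ N - a ^ N) := by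
  simp_rw [mul_comm _ c, ← mul_assoc, intervalIntegral.integral_const_mul, integral_pow,
    Nat.sub_add_cancel hN]
  have : (N:ℝ) ≠ 0 := by positivity
  field_simp
  rw [Nat.cast_sub hN, Nat.cast_one, sub_add_cancel]
  ring

lemma ContinuousOn.intervalIntegrable_of_mem_Icc {f : ℝ → ℝ} {a b c d : ℝ}
    (hf : ContinuousOn f (Icc a b)) (hc : c ∈ Icc a b) (hd : d ∈ Icc a b) :
    IntervalIntegrable f volume c d :=
  (hf.mono (uIcc_subset_Icc hc hd)).intervalIntegrable

section MAop

variable {N : ℕ} {γ : ℝ} {w : ℝ → ℝ}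

lemma continuousOn_MAinner_integrand (hγ : 0 ≤ γ) (hw : ContinuousOn w (Icc 0 1)) :
    ContinuousOn (fun τ : ℝ => (N:ℝ) * τ ^ (N - 1) * w τ ^ γ) (Icc 0 1) :=
  (continuousOn_const.mul (continuousOn_pow _)).mul (hw.rpow_const fun _ _ => Or.inr hγ)

lemma MAinner_integrand_nonneg (hw0 : ∀ t ∈ Icc (0:ℝ) 1, 0 ≤ w t) {τ : ℝ}
    (hτ : τ ∈ Icc (0:ℝ) 1) : 0 ≤ (N:ℝ) * τ ^ (N - 1) * w τ ^ γ := by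
  have := hw0 τ hτ
  have := hτ.1
  positivity

lemma continuousOn_MAinner (hγ : 0 ≤ γ) (hw : ContinuousOn w (Icc 0 1)) :
    ContinuousOn (MAinner N γ w) (Icc 0 1) := by
  have hint : IntegrableOn (fun τ : ℝ => (N:ℝ) * τ ^ (N - 1) * w τ ^ γ) (uIcc 0 1) := by
    rw [uIcc_of_le zero_le_one]
    exact (continuousOn_MAinner_integrand hγ hw).integrableOn_Icc
  have := intervalIntegral.continuousOn_primitive_interval hint
  rwa [uIcc_of_le zero_le_one] at this

lemma MAinner_nonneg (hw0 : ∀ t ∈ Icc (0:ℝ) 1, 0 ≤ w t) {s : ℝ} (hs : s ∈ Icc (0:ℝ) 1) :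
    0 ≤ MAinner N γ w s :=
  intervalIntegral.integral_nonneg hs.1 fun _ hτ =>
    MAinner_integrand_nonneg hw0 ⟨hτ.1, hτ.2.trans hs.2⟩

lemma MAinner_le (hN : 1 ≤ N) (hγ : 0 ≤ γ) (hw : ContinuousOn w (Icc 0 1))
    (hw0 : ∀ t ∈ Icc (0:ℝ) 1, 0 ≤ w t) {M : ℝ} (hM : ∀ t ∈ Icc (0:ℝ) 1, w t ≤ M)
    {s : ℝ} (hs : s ∈ Icc (0:ℝ) 1) : MAinner N γ w s ≤ M ^ γ := by
  have hM0 : 0 ≤ M := (hw0 0 ⟨le_rfl, zero_le_one⟩).trans (hM 0 ⟨le_rfl, zero_le_one⟩)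
  calc MAinner N γ w s ≤ ∫ τ in (0:ℝ)..s, (N:ℝ) * τ ^ (N - 1) * M ^ γ := by
        refine intervalIntegral.integral_mono_on hs.1
          ((continuousOn_MAinner_integrand hγ hw).intervalIntegrable_of_mem_Icc
            ⟨le_rfl, zero_le_one⟩ hs)
          (Continuous.intervalIntegrable (by fun_prop) _ _)
          fun τ hτ => ?_
        have hτ' : τ ∈ Icc (0:ℝ) 1 := ⟨hτ.1, hτ.2.trans hs.2⟩
        have := hτ.1
        gcongr
        exacts [hw0 τ hτ', hM τ hτ']
    _ = M ^ γ * s ^ N := by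
        rw [integral_natCast_mul_pow_pred_mul hN, zero_pow (by omega), sub_zero]
    _ ≤ M ^ γ := mul_le_of_le_one_right (by positivity) (pow_le_one₀ hs.1 hs.2)

lemma le_MAinner (hN : 1 ≤ N) (hγ : 0 ≤ γ) (hw : ContinuousOn w (Icc 0 1))
    (hw0 : ∀ t ∈ Icc (0:ℝ) 1, 0 ≤ w t) {c : ℝ} (hc0 : 0 ≤ c)
    (hc : ∀ τ ∈ Icc (1/4:ℝ) (3/4), c ≤ w τ) {s : ℝ} (hs : s ∈ Icc (3/4:ℝ) 1) :
    c ^ γ * (1/4) ^ N ≤ MAinner N γ w s := by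
  have hg := continuousOn_MAinner_integrand (N := N) hγ hw
  calc c ^ γ * (1/4) ^ N ≤ c ^ γ * ((3/4) ^ N - (1/4) ^ N) := by
        have : (2:ℝ) ≤ 3 ^ N := le_self_pow₀ (by norm_num) (by omega) |>.trans' (by norm_num)
        gcongr
        rw [show (3/4:ℝ) ^ N = 3 ^ N * (1/4) ^ N by rw [← mul_pow]; norm_num]
        nlinarith [pow_pos (by norm_num : (0:ℝ) < 1/4) N]
    _ = ∫ τ in (1/4:ℝ)..3/4, (N:ℝ) * τ ^ (N - 1) * c ^ γ :=
        (integral_natCast_mul_pow_pred_mul hN _ _ _).symm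
    _ ≤ ∫ τ in (1/4:ℝ)..3/4, (N:ℝ) * τ ^ (N - 1) * w τ ^ γ := by
        refine intervalIntegral.integral_mono_on (by norm_num)
          (Continuous.intervalIntegrable (by fun_prop) _ _)
          (hg.intervalIntegrable_of_mem_Icc (by norm_num) (by norm_num))
          fun τ hτ => ?_
        have : 0 ≤ τ := by linarith [hτ.1]
        gcongr
        exact hc τ hτ
    _ ≤ MAinner N γ w s :=
        intervalIntegral.integral_mono_interval (by norm_num) (by norm_num) (by linarith [hs.1])
          ((ae_restrict_of_forall_mem measurableSet_Ioc) fun τ hτ =>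
            MAinner_integrand_nonneg hw0 ⟨hτ.1.le, hτ.2.trans hs.2⟩)
          (hg.intervalIntegrable_of_mem_Icc (by norm_num) ⟨by linarith [hs.1], hs.2⟩)

lemma continuousOn_MAinner_rpow (hγ : 0 ≤ γ) (hw : ContinuousOn w (Icc 0 1)) :
    ContinuousOn (fun s => MAinner N γ w s ^ (N:ℝ)⁻¹) (Icc 0 1) :=
  (continuousOn_MAinner hγ hw).rpow_const fun _ _ => Or.inr (by positivity)

lemma continuousOn_MAop (hγ : 0 ≤ γ) (hw : ContinuousOn w (Icc 0 1)) :
    ContinuousOn (MAop N γ w) (Icc 0 1) := by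
  have hint : IntegrableOn (fun s => MAinner N γ w s ^ (N:ℝ)⁻¹) (uIcc 0 1) := by
    rw [uIcc_of_le zero_le_one]
    exact (continuousOn_MAinner_rpow hγ hw).integrableOn_Icc
  have := intervalIntegral.continuousOn_primitive_interval_left hint
  rwa [uIcc_of_le zero_le_one] at this

lemma MAop_nonneg (hw0 : ∀ t ∈ Icc (0:ℝ) 1, 0 ≤ w t) {t : ℝ} (ht : t ∈ Icc (0:ℝ) 1) :
    0 ≤ MAop N γ w t :=
  intervalIntegral.integral_nonneg ht.2 fun _ hs =>
    Real.rpow_nonneg (MAinner_nonneg hw0 ⟨ht.1.trans hs.1, hs.2⟩) _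

lemma MAop_le (hN : 1 ≤ N) (hγ : 0 ≤ γ) (hw : ContinuousOn w (Icc 0 1))
    (hw0 : ∀ t ∈ Icc (0:ℝ) 1, 0 ≤ w t) {M : ℝ} (hM : ∀ t ∈ Icc (0:ℝ) 1, w t ≤ M)
    {t : ℝ} (ht : t ∈ Icc (0:ℝ) 1) : MAop N γ w t ≤ M ^ (γ / N) := by
  have hM0 : 0 ≤ M := (hw0 0 ⟨le_rfl, zero_le_one⟩).trans (hM 0 ⟨le_rfl, zero_le_one⟩)
  calc MAop N γ w t ≤ ∫ _ in t..1, M ^ (γ / N) := by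
        refine intervalIntegral.integral_mono_on ht.2
          ((continuousOn_MAinner_rpow hγ hw).intervalIntegrable_of_mem_Icc ht
            ⟨zero_le_one, le_rfl⟩)
          intervalIntegrable_const fun s hs => ?_
        have hs' : s ∈ Icc (0:ℝ) 1 := ⟨ht.1.trans hs.1, hs.2⟩
        rw [div_eq_mul_inv, Real.rpow_mul hM0]
        gcongr
        exacts [MAinner_nonneg hw0 hs', MAinner_le hN hγ hw hw0 hM hs']
    _ = (1 - t) * M ^ (γ / N) := by simp
    _ ≤ M ^ (γ / N) := mul_le_of_le_one_left (by positivity) (by linarith [ht.1])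

lemma le_MAop (hN : 1 ≤ N) (hγ : 0 ≤ γ) (hw : ContinuousOn w (Icc 0 1))
    (hw0 : ∀ t ∈ Icc (0:ℝ) 1, 0 ≤ w t) {c : ℝ} (hc0 : 0 ≤ c)
    (hc : ∀ τ ∈ Icc (1/4:ℝ) (3/4), c ≤ w τ) {t : ℝ} (ht : t ∈ Icc (0:ℝ) (3/4)) :
    c ^ (γ / N) / 16 ≤ MAop N γ w t := by
  have hF := continuousOn_MAinner_rpow (N := N) hγ hw
  calc c ^ (γ / N) / 16 = ∫ _ in (3/4:ℝ)..1, (c ^ γ * (1/4) ^ N) ^ (N:ℝ)⁻¹ := by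
        have : (N:ℝ) ≠ 0 := by positivity
        rw [intervalIntegral.integral_const, smul_eq_mul,
          Real.mul_rpow (by positivity) (by positivity), ← Real.rpow_mul hc0, ← Real.rpow_natCast,
          ← Real.rpow_mul (by norm_num), mul_inv_cancel₀ this, Real.rpow_one, div_eq_mul_inv γ]
        ring
    _ ≤ ∫ s in (3/4:ℝ)..1, MAinner N γ w s ^ (N:ℝ)⁻¹ := by
        refine intervalIntegral.integral_mono_on (by norm_num) intervalIntegrable_const
          (hF.intervalIntegrable_of_mem_Icc (by norm_num) (by norm_num))
          fun s hs => ?_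
        gcongr
        exact le_MAinner hN hγ hw hw0 hc0 hc hs
    _ ≤ MAop N γ w t :=
        intervalIntegral.integral_mono_interval ht.2 (by norm_num) le_rfl
          ((ae_restrict_of_forall_mem measurableSet_Ioc) fun s hs =>
            Real.rpow_nonneg (MAinner_nonneg hw0 ⟨ht.1.trans hs.1.le, hs.2⟩) _)
          (hF.intervalIntegrable_of_mem_Icc ⟨ht.1, by linarith [ht.2]⟩ (by norm_num))

end MAop

lemma abs_le_supNorm {v : ℝ → ℝ} (hv : ContinuousOn v (Icc 0 1)) {t : ℝ}
    (ht : t ∈ Icc (0:ℝ) 1) : |v t| ≤ supNorm v :=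
  le_csSup (isCompact_Icc.image_of_continuousOn hv.abs).bddAbove ⟨t, ht, rfl⟩

lemma supNorm_le {v : ℝ → ℝ} {M : ℝ} (hM : ∀ t ∈ Icc (0:ℝ) 1, |v t| ≤ M) : supNorm v ≤ M :=
  Real.sSup_le (by rintro _ ⟨t, ht, rfl⟩; exact hM t ht)
    ((abs_nonneg _).trans (hM 0 ⟨le_rfl, zero_le_one⟩))

lemma MAop_MAop_bounds {N : ℕ} (hN : 1 ≤ N) {α β : ℝ} (hα : 0 ≤ α) (hβ : 0 ≤ β)
    {v : ℝ → ℝ} (hv : memK v) :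
    ((1/4) ^ (β / N) / 16) ^ (α / N) / 16 * supNorm v ^ (α * β / N ^ 2)
        ≤ supNorm (MAop N α (MAop N β v)) ∧
      supNorm (MAop N α (MAop N β v)) ≤ supNorm v ^ (α * β / N ^ 2) := by
  obtain ⟨hvc, hv0, hvK⟩ := hv
  set m := supNorm v
  have hvm : ∀ t ∈ Icc (0:ℝ) 1, v t ≤ m := fun t ht =>
    (le_abs_self _).trans (abs_le_supNorm hvc ht)
  have hm0 : 0 ≤ m := (hv0 0 ⟨le_rfl, zero_le_one⟩).trans (hvm 0 ⟨le_rfl, zero_le_one⟩)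
  have hexp : β / N * (α / N) = α * β / N ^ 2 := by ring
  set w := MAop N β v
  have hwc : ContinuousOn w (Icc 0 1) := continuousOn_MAop hβ hvc
  have hw0 : ∀ t ∈ Icc (0:ℝ) 1, 0 ≤ w t := fun t ht => MAop_nonneg hv0 ht
  have hwm : ∀ t ∈ Icc (0:ℝ) 1, w t ≤ m ^ (β / N) := fun t ht => MAop_le hN hβ hvc hv0 hvm ht
  have hw_low : ∀ τ ∈ Icc (1/4:ℝ) (3/4), (m / 4) ^ (β / N) / 16 ≤ w τ := fun τ hτ =>
    le_MAop hN hβ hvc hv0 (by positivity) (fun s hs => by linarith [hvK s hs])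
      ⟨by linarith [hτ.1], hτ.2⟩
  constructor
  · calc ((1/4) ^ (β / N) / 16) ^ (α / N) / 16 * m ^ (α * β / N ^ 2)
          = ((m / 4) ^ (β / N) / 16) ^ (α / N) / 16 := by
          rw [div_eq_mul_one_div m 4, Real.mul_rpow hm0 (by norm_num),
            mul_div_assoc (m ^ (β / N)), Real.mul_rpow (by positivity) (by positivity),
            ← Real.rpow_mul hm0, hexp]
          ring
      _ ≤ MAop N α w 0 :=
          le_MAop hN hα hwc hw0 (by positivity) hw_low ⟨le_rfl, by norm_num⟩
      _ ≤ supNorm (MAop N α w) :=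
          (le_abs_self _).trans
            (abs_le_supNorm (continuousOn_MAop hα hwc) ⟨le_rfl, zero_le_one⟩)
  · refine supNorm_le fun t ht => ?_
    rw [abs_of_nonneg (MAop_nonneg hw0 ht), ← hexp, Real.rpow_mul hm0]
    exact MAop_le hN hα hwc hw0 hwm ht

lemma exists_lt_mul_rpow {Γ p : ℝ} (hΓ : 0 < Γ) (hp : 1 < p) :
    ∃ R, ∀ r, R < r → r < Γ * r ^ p := by
  have hlim : Filter.Tendsto (fun r : ℝ => Γ * r ^ (p - 1)) Filter.atTop Filter.atTop :=
    (tendsto_rpow_atTop (by linarith)).const_mul_atTop hΓ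
  obtain ⟨R, hR⟩ := Filter.eventually_atTop.1
    ((hlim.eventually_gt_atTop 1).and (Filter.eventually_gt_atTop 0))
  refine ⟨R, fun r hr => ?_⟩
  obtain ⟨h1, h0⟩ := hR r hr.le
  calc r = 1 * r := (one_mul r).symm
    _ < Γ * r ^ (p - 1) * r := by gcongr
    _ = Γ * r ^ p := by rw [mul_assoc, Real.rpow_sub_one h0.ne', div_mul_cancel₀ _ h0.ne']

theorem stmt8 (N : ℕ) (hN : 2 ≤ N) (α β : ℝ) (hα : 0 < α) (hβ : 0 < β)
    (hαβ : (N:ℝ) ^ 2 < α * β) :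
    (∃ Γ₁ > (0:ℝ),
      (∀ v : ℝ → ℝ, memK v →
        Γ₁ * supNorm v ^ (α * β / (N:ℝ) ^ 2) ≤ supNorm (MAop N α (MAop N β v)) ∧
        supNorm (MAop N α (MAop N β v)) ≤ supNorm v ^ (α * β / (N:ℝ) ^ 2))) ∧
    (∀ r₁ : ℝ, 0 < r₁ → r₁ < 1 → ∀ v : ℝ → ℝ, memK v → supNorm v = r₁ →
      supNorm (MAop N α (MAop N β v)) < supNorm v) ∧
    (∃ R : ℝ, ∀ r₂ : ℝ, R < r₂ → ∀ v : ℝ → ℝ, memK v → supNorm v = r₂ →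
      supNorm v < supNorm (MAop N α (MAop N β v))) := by
  have hp : 1 < α * β / (N:ℝ) ^ 2 := (one_lt_div (by positivity)).2 hαβ
  set Γ : ℝ := ((1/4) ^ (β / N) / 16) ^ (α / N) / 16
  have hΓ : 0 < Γ := by positivity
  have hbounds := fun v (hv : memK v) => MAop_MAop_bounds (by omega : 1 ≤ N) hα.le hβ.le hv
  obtain ⟨R, hR⟩ := exists_lt_mul_rpow hΓ hp
  refine ⟨⟨Γ, hΓ, hbounds⟩, fun r hr0 hr1 v hv hvr => ?_,
    ⟨R, fun r hr v hv hvr => ?_⟩⟩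
  · calc supNorm (MAop N α (MAop N β v)) ≤ supNorm v ^ (α * β / (N:ℝ) ^ 2) := (hbounds v hv).2
      _ < supNorm v := hvr ▸ Real.rpow_lt_self_of_lt_one hr0 hr1 hp
  · exact (hvr ▸ hR r hr).trans_le (hbounds v hv).1
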